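/- (Lemma 1) For any two boundary vertices b1, b2 ∈ B, the distance between b1 and b2 in the boundary graph BG equals the distance between b1 and b2 in G: dist_BG(b1,b2) = dist_G(b1,b2). -/

import Mathlib

/-
Any `G`-walk between boundary vertices splits at its boundary crossings into maximal segments
inside a single component; every such segment joins boundary vertices, so it is dominated by a
`BG`-edge of weight the component distance, and every crossing edge is itself a `BG`-edge.
Conversely every `BG`-edge is realised, up to its weight, by a `G`-walk.
-/

open scoped ENNReal

namespace SPQ

variable {V : Type*} {ι : Type*}

/-- The length of a walk: the sum of the weights `w` over its consecutive edges. -/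
noncomputable def wlen (w : V → V → ℝ≥0∞) {G : SimpleGraph V} {u v : V} (p : G.Walk u v) : ℝ≥0∞ :=
  (p.darts.map fun d => w d.toProd.1 d.toProd.2).sum

/-- The shortest-path distance: infimum of lengths of all walks (⊤ if none exists). -/
noncomputable def gdist (G : SimpleGraph V) (w : V → V → ℝ≥0∞) (u v : V) : ℝ≥0∞ :=
  ⨅ p : G.Walk u v, wlen w p

/-- The component `C_i`: the subgraph of `G` induced on `P ⁻¹ {i}`
(as a graph on `V`: edges of `G` with both endpoints mapped to `i` by `P`). -/
def comp (G : SimpleGraph V) (P : V → ι) (i : ι) : SimpleGraph V where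
  Adj u v := G.Adj u v ∧ P u = i ∧ P v = i
  symm := ⟨fun _ _ h => ⟨h.1.symm, h.2.2, h.2.1⟩⟩
  loopless := ⟨fun u h => G.loopless.irrefl u h.1⟩

/-- The boundary `B(C_i)`: vertices of component `i` having a `G`-neighbor
in a different component. -/
def bdry (G : SimpleGraph V) (P : V → ι) (i : ι) : Set V :=
  {v | P v = i ∧ ∃ u, G.Adj v u ∧ P u ≠ i}

/-- The set `B` of all boundary vertices. -/
def bdryAll (G : SimpleGraph V) (P : V → ι) : Set V :=
  ⋃ i, bdry G P i

/-- The boundary graph `BG`: distinct boundary vertices `b1, b2` are adjacent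
iff `P b1 = P b2` or `G.Adj b1 b2`. -/
def BGraph (G : SimpleGraph V) (P : V → ι) : SimpleGraph V where
  Adj b1 b2 := b1 ≠ b2 ∧ b1 ∈ bdryAll G P ∧ b2 ∈ bdryAll G P ∧ (P b1 = P b2 ∨ G.Adj b1 b2)
  symm := by
    constructor
    intro u v h
    refine ⟨h.1.symm, h.2.2.1, h.2.1, ?_⟩
    rcases h.2.2.2 with h' | h'
    · exact Or.inl h'.symm
    · exact Or.inr h'.symm
  loopless := ⟨fun u h => h.1 rfl⟩

open Classical in
/-- The edge weight of the boundary graph: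
`wt b1 b2 = dist_{C_{P b1}}(b1, b2)` if `P b1 = P b2`, and `w b1 b2` otherwise. -/
noncomputable def wt (G : SimpleGraph V) (P : V → ι) (w : V → V → ℝ≥0∞) (b1 b2 : V) : ℝ≥0∞ :=
  if P b1 = P b2 then gdist (comp G P (P b1)) w b1 b2 else w b1 b2

open SimpleGraph

section WalkLength

variable {G H : SimpleGraph V} {w w' : V → V → ℝ≥0∞}

@[simp]
lemma wlen_nil {u : V} : wlen w (Walk.nil : G.Walk u u) = 0 := rfl

@[simp]
lemma wlen_cons {u v x : V} (h : G.Adj u v) (p : G.Walk v x) :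
    wlen w (Walk.cons h p) = w u v + wlen w p := by
  simp [wlen]

lemma wlen_append {u v x : V} (p : G.Walk u v) (q : G.Walk v x) :
    wlen w (p.append q) = wlen w p + wlen w q := by
  simp [wlen, Walk.darts_append]

@[simp]
lemma wlen_mapLe (hle : G ≤ H) {u v : V} (p : G.Walk u v) :
    wlen w (p.mapLe hle) = wlen w p := by
  induction p with
  | nil => rfl
  | cons h q ih => simp only [Walk.mapLe, Walk.map_cons] at ih ⊢; simp [ih]

lemma gdist_le_wlen {u v : V} (p : G.Walk u v) : gdist G w u v ≤ wlen w p :=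
  iInf_le _ p

@[simp]
lemma gdist_self (u : V) : gdist G w u u = 0 :=
  nonpos_iff_eq_zero.1 (gdist_le_wlen Walk.nil)

lemma gdist_triangle (u x v : V) :
    gdist G w u v ≤ gdist G w u x + gdist G w x v := by
  change _ ≤ (⨅ p : G.Walk u x, wlen w p) + ⨅ q : G.Walk x v, wlen w q
  rw [ENNReal.iInf_add]
  refine le_iInf fun p => ?_
  rw [ENNReal.add_iInf]
  exact le_iInf fun q => (gdist_le_wlen (p.append q)).trans_eq (wlen_append p q)

lemma gdist_le_of_adj {u v : V} (h : G.Adj u v) : gdist G w u v ≤ w u v := by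
  simpa using gdist_le_wlen (w := w) (Walk.cons h Walk.nil)

lemma gdist_anti (hle : G ≤ H) (u v : V) : gdist H w u v ≤ gdist G w u v :=
  le_iInf fun p => (gdist_le_wlen (p.mapLe hle)).trans_eq (wlen_mapLe hle p)

lemma gdist_le_wlen_of_forall_adj (hH : ∀ u v, H.Adj u v → gdist G w u v ≤ w' u v)
    {u v : V} (p : H.Walk u v) : gdist G w u v ≤ wlen w' p := by
  induction p with
  | nil => simp
  | @cons u x v h q ih =>
    rw [wlen_cons]
    exact (gdist_triangle u x v).trans (add_le_add (hH u x h) ih)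

lemma gdist_le_gdist_of_forall_adj (hH : ∀ u v, H.Adj u v → gdist G w u v ≤ w' u v)
    (u v : V) : gdist G w u v ≤ gdist H w' u v :=
  le_iInf (gdist_le_wlen_of_forall_adj hH)

end WalkLength

section Partition

variable {G : SimpleGraph V} {w : V → V → ℝ≥0∞} (P : V → ι)

lemma comp_le (i : ι) : comp G P i ≤ G := fun _ _ h => h.1

lemma mem_bdryAll_of_adj {u v : V} (h : G.Adj u v) (hne : P v ≠ P u) : u ∈ bdryAll G P :=
  Set.mem_iUnion.2 ⟨P u, rfl, v, h, hne⟩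

lemma gdist_le_wt {u v : V} (h : (BGraph G P).Adj u v) : gdist G w u v ≤ wt G P w u v := by
  rw [wt]
  split_ifs with hP
  · exact gdist_anti (comp_le P _) u v
  · exact gdist_le_of_adj (h.2.2.2.resolve_left hP)

lemma gdist_BGraph_le_of_ne {u v : V} (hne : P u ≠ P v) (h : G.Adj u v) :
    gdist (BGraph G P) (wt G P w) u v ≤ w u v := by
  have hBG : (BGraph G P).Adj u v :=
    ⟨h.ne, mem_bdryAll_of_adj P h hne.symm, mem_bdryAll_of_adj P h.symm hne, Or.inr h⟩
  simpa [wt, hne] using gdist_le_of_adj (w := wt G P w) hBG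

lemma gdist_BGraph_le_gdist_comp {b c : V} (hb : b ∈ bdryAll G P) (hc : c ∈ bdryAll G P)
    (hP : P b = P c) : gdist (BGraph G P) (wt G P w) b c ≤ gdist (comp G P (P b)) w b c := by
  rcases eq_or_ne b c with rfl | hne
  · simp
  · have hBG : (BGraph G P).Adj b c := ⟨hne, hb, hc, Or.inl hP⟩
    simpa [wt, hP] using gdist_le_of_adj (w := wt G P w) hBG

/-- The invariant of the induction along a `G`-walk `p` from `u` to the boundary vertex `v`:
`b` is any boundary vertex in the component of `u`, where the current segment started. -/
lemma gdist_BGraph_le_gdist_comp_add_wlen {u v : V} (p : G.Walk u v) (hv : v ∈ bdryAll G P)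
    {b : V} (hb : b ∈ bdryAll G P) (hPb : P b = P u) :
    gdist (BGraph G P) (wt G P w) b v ≤ gdist (comp G P (P u)) w b u + wlen w p := by
  induction p generalizing b with
  | nil => simpa [hPb] using gdist_BGraph_le_gdist_comp P hb hv hPb
  | @cons u x v h q ih =>
    rw [wlen_cons, ← add_assoc]
    by_cases hPx : P x = P u
    · have extend : gdist (comp G P (P u)) w b x ≤ gdist (comp G P (P u)) w b u + w u x :=
        (gdist_triangle b u x).trans <|
          add_le_add_right (gdist_le_of_adj (G := comp G P (P u)) ⟨h, rfl, hPx⟩) _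
      calc gdist (BGraph G P) (wt G P w) b v
          ≤ gdist (comp G P (P u)) w b x + wlen w q := hPx ▸ ih hv hb (hPb.trans hPx.symm)
        _ ≤ _ := add_le_add_left extend _
    · have hu : u ∈ bdryAll G P := mem_bdryAll_of_adj P h hPx
      have hx : x ∈ bdryAll G P := mem_bdryAll_of_adj P h.symm (Ne.symm hPx)
      have tail : gdist (BGraph G P) (wt G P w) x v ≤ wlen w q := by
        simpa using ih hv hx rfl
      calc gdist (BGraph G P) (wt G P w) b v
          ≤ gdist (BGraph G P) (wt G P w) b u + gdist (BGraph G P) (wt G P w) u x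
              + gdist (BGraph G P) (wt G P w) x v :=
            (gdist_triangle b x v).trans (add_le_add_left (gdist_triangle b u x) _)
        _ ≤ _ := add_le_add (add_le_add (hPb ▸ gdist_BGraph_le_gdist_comp P hb hu hPb)
              (gdist_BGraph_le_of_ne P (Ne.symm hPx) h)) tail

end Partition

theorem stmt3_general {V : Type*} {ι : Type*}
    (G : SimpleGraph V) (w : V → V → ℝ≥0∞)
    (P : V → ι) (b1 b2 : V)
    (hb1 : b1 ∈ bdryAll G P) (hb2 : b2 ∈ bdryAll G P) :
    gdist (BGraph G P) (wt G P w) b1 b2 = gdist G w b1 b2 := by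
  refine le_antisymm (le_iInf fun p => ?_)
    (gdist_le_gdist_of_forall_adj (fun _ _ => gdist_le_wt P) b1 b2)
  simpa using gdist_BGraph_le_gdist_comp_add_wlen P p hb2 hb1 rfl

/-- Lemma 1: For any two boundary vertices `b1, b2 ∈ B`, the distance
between `b1` and `b2` in the boundary graph `BG` equals the distance between `b1` and
`b2` in `G`. -/
theorem stmt3 {V : Type*} {ι : Type*} [Fintype V] [Fintype ι]
    (G : SimpleGraph V) (w : V → V → ℝ≥0∞)
    (hsymm : ∀ u v, w u v = w v u) (hfin : ∀ u v, G.Adj u v → w u v < ⊤)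
    (P : V → ι) (b1 b2 : V)
    (hb1 : b1 ∈ bdryAll G P) (hb2 : b2 ∈ bdryAll G P) :
    gdist (BGraph G P) (wt G P w) b1 b2 = gdist G w b1 b2 :=
  stmt3_general G w P b1 b2 hb1 hb2

end SPQ
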